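/- arXiv:2103.15129 — 5 statements merged into one kernel-verified Lean document; each statement's English description precedes it below -/
import Mathlib

section
/- There is an absolute constant C > 0 such that for all integers n, m, n', m' ≥ 1 with n² + m² = n'² + m'² and n·m < n'·m', we have 1/n⁴ + 1/m⁴ + 1/n'⁴ + 1/m'⁴ ≤ C·((1/n² + 1/m²) − (1/n'² + 1/m'²)). -/
set_option maxHeartbeats 1000000

private lemma sqle (x y : ℤ) (hy : 0 ≤ y) (h : x^2 ≤ y^2) : x ≤ y :=
  le_of_pow_le_pow_left₀ two_ne_zero hy h

private lemma K3 (s A B d d' nm : ℤ) (hnm : 1 ≤ nm) (hA : A = nm^2)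
    (hd2 : d^2 = s^2 - 4*A) (hd'2 : d'^2 = s^2 - 4*B) (hd0 : 0 ≤ d) (hd'0 : 0 ≤ d')
    (hg1 : A + 2*nm + 1 ≤ B) (hgd' : d' + 1 ≤ B - A) (hs3 : 3 ≤ s) :
    s ≤ 4*(B - A) := by
  by_cases hc1 : s^2 ≤ 8*A
  · have h8 : s ≤ 8*nm := by
      refine sqle _ _ (by linarith) ?_
      nlinarith [hc1, hA, sq_nonneg nm]
    linarith [hg1]
  · push_neg at hc1
    have h2d2 : s^2 < 2*d^2 := by linarith [hd2]
    by_cases hc2 : d ≤ 2*d'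
    · have hs2d : s < 2*d := by
        have : s^2 < (2*d)^2 := by nlinarith [sq_nonneg d]
        nlinarith [sqle s (2*d) (by linarith) (by linarith)]
      linarith [hgd']
    · push_neg at hc2
      have hc2' : 2*d' + 1 ≤ d := by omega
      have hd1 : 1 ≤ d := by nlinarith [hd0, hs3, h2d2]
      have hh : 4*d'^2 ≤ (d-1)^2 := by nlinarith [hc2', hd'0]
      have h16 : 3*d^2 ≤ 16*(B-A) := by nlinarith [hh, hd1, hd2, hd'2]
      nlinarith [h16, h2d2, hs3]

private lemma pieces (s A B d d' : ℤ) (hApos : 0 < A) (hBpos : 0 < B) (hAB : A < B)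
    (hspos : 0 < s) (hd0 : 0 ≤ d) (hd'0 : 0 ≤ d')
    (hd2 : d^2 = s^2 - 4*A) (hd'2 : d'^2 = s^2 - 4*B)
    (haS : s ≤ A + 1) (h4B : 4*B ≤ s^2) (hgd' : d' + 1 ≤ B - A) (hK3 : s ≤ 4*(B-A))
    (hs3 : 3 ≤ s) :
    B^2*d^2 + A^2*d'^2 + 2*A*B*(A+B) ≤ 13*s*A*B*(B-A) := by
  have hgpos : 0 < B - A := by linarith
  have pieceA : 2*A*B*(A+B) ≤ 4*s*A*B*(B-A) := by
    have h1 : 2*A*B*(A+B) ≤ A*B*(4*B) := by nlinarith [mul_pos hApos hBpos]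
    have h2 : A*B*(4*B) ≤ A*B*s^2 := by nlinarith [mul_pos hApos hBpos]
    have h3 : A*B*s^2 ≤ A*B*(s*(4*(B-A))) := by
      have hx : s*s ≤ s*(4*(B-A)) := mul_le_mul_of_nonneg_left hK3 (le_of_lt hspos)
      nlinarith [mul_pos hApos hBpos, hx]
    nlinarith [h1, h2, h3]
  have hd's : d' ≤ s := by nlinarith [hd'2, hBpos, hspos, hd'0]
  have pieceB : A^2*d'^2 ≤ s*A*B*(B-A) := by
    have h1 : d'^2 ≤ s*(B-A) := by nlinarith [hd's, hgd', hd'0, hspos]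
    have h2 : A^2*d'^2 ≤ A^2*(s*(B-A)) := mul_le_mul_of_nonneg_left h1 (sq_nonneg A)
    have h3 : A^2*(s*(B-A)) ≤ (A*B)*(s*(B-A)) := by
      have hAB2 : A^2 ≤ A*B := by nlinarith [hApos, hAB]
      exact mul_le_mul_of_nonneg_right hAB2 (by positivity)
    nlinarith [h2, h3]
  have hds : d^2 ≤ s^2 := by nlinarith [hd2, hApos]
  have pieceC : B^2*d^2 ≤ 8*s*A*B*(B-A) := by
    by_cases hc : B ≤ 2*A
    · have h1 : B^2*d^2 ≤ 2*A*B*d^2 := by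
        nlinarith [mul_nonneg (mul_nonneg (by linarith : (0:ℤ) ≤ 2*A - B) (sq_nonneg d)) hBpos.le]
      have h2 : 2*A*B*d^2 ≤ 2*A*B*s^2 := by nlinarith [hds, mul_pos hApos hBpos]
      have h3 : 2*A*B*s^2 ≤ 2*A*B*(s*(4*(B-A))) := by
        have hx : s*s ≤ s*(4*(B-A)) := mul_le_mul_of_nonneg_left hK3 (le_of_lt hspos)
        nlinarith [mul_pos hApos hBpos, hx]
      nlinarith [h1, h2, h3]
    · push_neg at hc
      have hB2g : B ≤ 2*(B-A) := by omega
      have hs2A : s ≤ 2*A := by linarith [haS, hs3]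
      have h1 : B^2*d^2 ≤ B^2*s^2 := by nlinarith [hds, hBpos]
      have h2 : B^2*s^2 ≤ (2*(B-A))*B*s*(2*A) := by
        have hx : B*s ≤ (2*(B-A))*(2*A) := by nlinarith [hB2g, hs2A, hBpos, hspos]
        nlinarith [hx, mul_pos hBpos hspos]
      nlinarith [h1, h2]
  linarith [pieceA, pieceB, pieceC]

theorem int_key (n m n' m' s A B : ℤ) (hn : 1 ≤ n) (hm : 1 ≤ m) (hn' : 1 ≤ n') (hm' : 1 ≤ m')
    (hs_def : s = n^2 + m^2) (hA_def : A = n^2*m^2) (hB_def : B = n'^2*m'^2)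
    (hs : n^2 + m^2 = n'^2 + m'^2) (hp : n * m < n' * m') :
    B^2*(n^4+m^4) + A^2*(n'^4+m'^4) ≤ 13*s*A*B*(B-A) := by
  set d : ℤ := |n^2 - m^2| with hd_def
  set d' : ℤ := |n'^2 - m'^2| with hd'_def
  have hApos : 0 < A := by rw [hA_def]; positivity
  have hBpos : 0 < B := by rw [hB_def]; positivity
  have hnm : 1 ≤ n*m := by nlinarith
  have hAB : A < B := by rw [hA_def, hB_def]; nlinarith [hp, hnm]
  have haS : s ≤ A + 1 := by
    rw [hs_def, hA_def]
    nlinarith [mul_nonneg (by nlinarith : (0:ℤ) ≤ n^2 - 1) (by nlinarith : (0:ℤ) ≤ m^2 - 1)]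
  have h4B : 4*B ≤ s^2 := by rw [hs_def, hs, hB_def]; nlinarith [sq_nonneg (n'^2 - m'^2)]
  have hg1 : A + 2*(n*m) + 1 ≤ B := by
    rw [hA_def, hB_def]
    nlinarith [hp, hnm]
  have hd2 : d^2 = s^2 - 4*A := by rw [hd_def, sq_abs, hs_def, hA_def]; ring
  have hd'2 : d'^2 = s^2 - 4*B := by rw [hd'_def, sq_abs, hs_def, hs, hB_def]; ring
  have hd0 : 0 ≤ d := abs_nonneg _
  have hd'0 : 0 ≤ d' := abs_nonneg _
  have hev1 : Even (d - s) := by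
    rcases abs_choice (n^2 - m^2) with h | h <;> rw [hd_def, h, hs_def]
    · exact ⟨-m^2, by ring⟩
    · exact ⟨-n^2, by ring⟩
  have hev2 : Even (d' - s) := by
    rcases abs_choice (n'^2 - m'^2) with h | h <;> rw [hd'_def, h, hs_def, hs]
    · exact ⟨-m'^2, by ring⟩
    · exact ⟨-n'^2, by ring⟩
  have hpar : Even (d - d') := by
    have := hev1.sub hev2
    simpa using this
  have hdd' : d' < d := by
    have hlt : d'^2 < d^2 := by rw [hd2, hd'2]; linarith
    exact lt_of_pow_lt_pow_left₀ 2 hd0 hlt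
  have hK2 : d' + 2 ≤ d := by
    obtain ⟨k, hk⟩ := hpar
    omega
  have hgd' : d' + 1 ≤ B - A := by
    have hsq : (d'+2)^2 ≤ d^2 := pow_le_pow_left₀ (by linarith) hK2 2
    linarith [hsq, hd2, hd'2]
  have hs3 : 3 ≤ s := by
    rw [hs_def]
    by_cases h1 : 2 ≤ n
    · nlinarith
    by_cases h2 : 2 ≤ m
    · nlinarith
    have hn1 : n = 1 := by omega
    have hm1 : m = 1 := by omega
    exfalso
    have h2' : n'^2 + m'^2 = 2 := by rw [← hs, hn1, hm1]; ring
    have hn'1 : n' = 1 := by nlinarith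
    have hm'1 : m' = 1 := by nlinarith
    rw [hn1, hm1, hn'1, hm'1] at hp; omega
  have hspos : 0 < s := by linarith
  have hA' : A = (n*m)^2 := by rw [hA_def]; ring
  have hK3 := K3 s A B d d' (n*m) hnm hA' hd2 hd'2 hd0 hd'0 hg1 hgd' hs3
  have main := pieces s A B d d' hApos hBpos hAB hspos hd0 hd'0 hd2 hd'2 haS h4B hgd' hK3 hs3
  have hX : n^4 + m^4 = s^2 - 2*A := by rw [hs_def, hA_def]; ring
  have hY : n'^4 + m'^4 = s^2 - 2*B := by rw [hs_def, hs, hB_def]; ring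
  calc B^2*(n^4+m^4) + A^2*(n'^4+m'^4) = B^2*d^2 + A^2*d'^2 + 2*A*B*(A+B) := by
        rw [hX, hY, hd2, hd'2]; ring
    _ ≤ 13*s*A*B*(B-A) := main

theorem fourth_power_majorized :
    ∃ C > (0:ℝ), ∀ n m n' m' : ℕ, 1 ≤ n → 1 ≤ m → 1 ≤ n' → 1 ≤ m' →
      n^2 + m^2 = n'^2 + m'^2 → n * m < n' * m' →
      1/(n:ℝ)^4 + 1/(m:ℝ)^4 + 1/(n':ℝ)^4 + 1/(m':ℝ)^4 ≤
        C * ((1/(n:ℝ)^2 + 1/(m:ℝ)^2) - (1/(n':ℝ)^2 + 1/(m':ℝ)^2)) := by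
  refine ⟨13, by norm_num, ?_⟩
  intro n m n' m' hn hm hn' hm' hs hp
  have key := int_key (n:ℤ) (m:ℤ) (n':ℤ) (m':ℤ) ((n:ℤ)^2+(m:ℤ)^2) ((n:ℤ)^2*(m:ℤ)^2)
    ((n':ℤ)^2*(m':ℤ)^2) (by exact_mod_cast hn) (by exact_mod_cast hm)
    (by exact_mod_cast hn') (by exact_mod_cast hm') rfl rfl rfl
    (by exact_mod_cast hs) (by exact_mod_cast hp)
  have keyR : ((n':ℝ)^2*(m':ℝ)^2)^2*((n:ℝ)^4+(m:ℝ)^4) + ((n:ℝ)^2*(m:ℝ)^2)^2*((n':ℝ)^4+(m':ℝ)^4)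
      ≤ 13*((n:ℝ)^2+(m:ℝ)^2)*((n:ℝ)^2*(m:ℝ)^2)*((n':ℝ)^2*(m':ℝ)^2)*
        (((n':ℝ)^2*(m':ℝ)^2) - (n:ℝ)^2*(m:ℝ)^2) := by exact_mod_cast key
  have hn0 : (0:ℝ) < n := by exact_mod_cast hn
  have hm0 : (0:ℝ) < m := by exact_mod_cast hm
  have hn'0 : (0:ℝ) < n' := by exact_mod_cast hn'
  have hm'0 : (0:ℝ) < m' := by exact_mod_cast hm'
  have hsR : (n:ℝ)^2+(m:ℝ)^2 = (n':ℝ)^2+(m':ℝ)^2 := by exact_mod_cast hs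
  have ha : (0:ℝ) < (n:ℝ)^2*(m:ℝ)^2 := by positivity
  have hb : (0:ℝ) < (n':ℝ)^2*(m':ℝ)^2 := by positivity
  have e1 : 1/(n:ℝ)^4 + 1/(m:ℝ)^4 + 1/(n':ℝ)^4 + 1/(m':ℝ)^4 =
      (((n':ℝ)^2*(m':ℝ)^2)^2*((n:ℝ)^4+(m:ℝ)^4) + ((n:ℝ)^2*(m:ℝ)^2)^2*((n':ℝ)^4+(m':ℝ)^4))
        / (((n:ℝ)^2*(m:ℝ)^2)^2 * ((n':ℝ)^2*(m':ℝ)^2)^2) := by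
    field_simp
    ring
  have e2 : (1/(n:ℝ)^2 + 1/(m:ℝ)^2) - (1/(n':ℝ)^2 + 1/(m':ℝ)^2) =
      (((n:ℝ)^2+(m:ℝ)^2) * (((n':ℝ)^2*(m':ℝ)^2) - (n:ℝ)^2*(m:ℝ)^2))
        / (((n:ℝ)^2*(m:ℝ)^2) * ((n':ℝ)^2*(m':ℝ)^2)) := by
    have e2a : 1/(n:ℝ)^2 + 1/(m:ℝ)^2 = ((n:ℝ)^2+(m:ℝ)^2)/((n:ℝ)^2*(m:ℝ)^2) := by
      field_simp; ring
    have e2b : 1/(n':ℝ)^2 + 1/(m':ℝ)^2 = ((n:ℝ)^2+(m:ℝ)^2)/((n':ℝ)^2*(m':ℝ)^2) := by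
      rw [hsR]; field_simp; ring
    rw [e2a, e2b]
    field_simp
  rw [e1, e2, mul_div_assoc' (13:ℝ), div_le_div_iff₀ (by positivity) (by positivity)]
  nlinarith [mul_le_mul_of_nonneg_right keyR (le_of_lt (mul_pos ha hb)), mul_pos ha hb]
end

section
/- Let θ > 0 be irrational. Then for every ε > 0 there exist positive integers n, m, m' such that −ε < θn² + m² − m'² < 0. -/
set_option maxHeartbeats 1000000

open Int

/-- Van der Waerden for 3-term APs, from the Hales–Jewett corollary. -/
lemma vdw3 {κ : Type*} [Finite κ] (C : ℕ → κ) :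
    ∃ a b : ℕ, 0 < a ∧ C (b + a) = C b ∧ C (b + 2 * a) = C b := by
  obtain ⟨a, ha, b, c, hc⟩ :=
    Combinatorics.exists_mono_homothetic_copy ({0, 1, 2} : Finset ℕ) C
  have h0 := hc 0 (by simp)
  have h1 := hc 1 (by simp)
  have h2 := hc 2 (by simp)
  simp only [smul_eq_mul, mul_zero, mul_one, zero_add] at h0 h1 h2
  refine ⟨a, b, ha, ?_, ?_⟩
  · rw [add_comm] at h1; rw [h1, h0]
  · have h : a * 2 + b = b + 2 * a := by ring
    rw [h] at h2; rw [h2, h0]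

/-- From vdW: `2 a² α` is within `ε` of an integer for some `a ≥ 1`. -/
lemma exists_two_sq_near_int (α : ℝ) {ε : ℝ} (hε : 0 < ε) :
    ∃ (a : ℕ) (k : ℤ), 0 < a ∧ |2 * (a : ℝ) ^ 2 * α - k| < ε := by
  set K : ℕ := ⌈3 / ε⌉₊ with hKdef
  have hKpos : 0 < K := Nat.ceil_pos.2 (by positivity)
  have hKR : (0:ℝ) < K := by exact_mod_cast hKpos
  have hKε : 3 / (K : ℝ) ≤ ε := by
    rw [div_le_iff₀ hKR]
    have h1 : 3 / ε ≤ (K : ℝ) := Nat.le_ceil _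
    calc (3:ℝ) = (3 / ε) * ε := by field_simp
    _ ≤ (K : ℝ) * ε := by nlinarith
    _ = ε * K := by ring
  have hfr : ∀ n : ℕ, (0:ℝ) ≤ Int.fract ((n:ℝ)^2 * α) * K ∧
      Int.fract ((n:ℝ)^2 * α) * K < K := by
    intro n
    refine ⟨mul_nonneg (Int.fract_nonneg _) hKR.le, ?_⟩
    have := Int.fract_lt_one ((n:ℝ)^2 * α)
    nlinarith
  let C : ℕ → Fin K := fun n =>
    ⟨(⌊Int.fract ((n:ℝ)^2 * α) * K⌋).toNat, by
      have h := hfr n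
      have h2 : ⌊Int.fract ((n:ℝ)^2 * α) * K⌋ < (K : ℤ) :=
        Int.floor_lt.2 (by exact_mod_cast h.2)
      omega⟩
  obtain ⟨a, b, ha, h1, h2⟩ := vdw3 C
  have key : ∀ {u v : ℕ}, C u = C v →
      |Int.fract ((u:ℝ)^2 * α) - Int.fract ((v:ℝ)^2 * α)| < 1 / K := by
    intro u v huv
    have hu : (0:ℤ) ≤ ⌊Int.fract ((u:ℝ)^2 * α) * K⌋ := Int.floor_nonneg.2 (hfr u).1
    have hv : (0:ℤ) ≤ ⌊Int.fract ((v:ℝ)^2 * α) * K⌋ := Int.floor_nonneg.2 (hfr v).1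
    have hcg := congrArg (fun x : Fin K => (x.1 : ℤ)) huv
    simp only [C] at hcg
    have hfl : ⌊Int.fract ((u:ℝ)^2 * α) * K⌋ = ⌊Int.fract ((v:ℝ)^2 * α) * K⌋ := by omega
    have h := abs_sub_lt_one_of_floor_eq_floor hfl
    rw [lt_div_iff₀ hKR]
    calc |Int.fract ((u:ℝ)^2 * α) - Int.fract ((v:ℝ)^2 * α)| * K
        = |Int.fract ((u:ℝ)^2 * α) - Int.fract ((v:ℝ)^2 * α)| * |(K:ℝ)| := by
          rw [abs_of_nonneg hKR.le]
    _ = |Int.fract ((u:ℝ)^2 * α) * K - Int.fract ((v:ℝ)^2 * α) * K| := by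
          rw [← abs_mul]; ring_nf
    _ < 1 := h
  have k1 := key h1
  have k2 := key h2
  have e0 := (Int.floor_add_fract (((b:ℕ):ℝ)^2 * α)).symm
  have e1 := (Int.floor_add_fract (((b+a:ℕ):ℝ)^2 * α)).symm
  have e2 := (Int.floor_add_fract (((b+2*a:ℕ):ℝ)^2 * α)).symm
  set f0 := Int.fract (((b:ℕ):ℝ)^2 * α) with hf0
  set f1 := Int.fract (((b+a:ℕ):ℝ)^2 * α) with hf1
  set f2 := Int.fract (((b+2*a:ℕ):ℝ)^2 * α) with hf2
  set K0 := ⌊((b:ℕ):ℝ)^2 * α⌋ with hK0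
  set K1 := ⌊((b+a:ℕ):ℝ)^2 * α⌋ with hK1
  set K2 := ⌊((b+2*a:ℕ):ℝ)^2 * α⌋ with hK2
  refine ⟨a, K2 - 2 * K1 + K0, ha, ?_⟩
  have expand : 2 * (a : ℝ) ^ 2 * α - ((K2 - 2 * K1 + K0 : ℤ) : ℝ)
      = (f2 - f0) + (-2) * (f1 - f0) := by
    push_cast at e0 e1 e2 ⊢
    linear_combination e2 - 2 * e1 + e0
  rw [expand]
  calc |(f2 - f0) + (-2) * (f1 - f0)| ≤ |f2 - f0| + |(-2) * (f1 - f0)| := abs_add_le _ _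
  _ = |f2 - f0| + 2 * |f1 - f0| := by rw [abs_mul]; norm_num
  _ < 1/K + 2 * (1/K) := by linarith
  _ = 3 / K := by ring
  _ ≤ ε := hKε


/-- Some positive square multiple of `α` is within `ε` of an integer. -/
lemma exists_sq_near_int (α : ℝ) {ε : ℝ} (hε : 0 < ε) :
    ∃ (n : ℕ) (k : ℤ), 0 < n ∧ |α * (n:ℝ)^2 - k| < ε := by
  obtain ⟨a, k, ha, h⟩ := exists_two_sq_near_int (2 * α) hε
  refine ⟨2 * a, k, by positivity, ?_⟩
  have : α * ((2*a : ℕ):ℝ)^2 = 2 * (a:ℝ)^2 * (2 * α) := by push_cast; ring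
  rw [this]; exact h

/-- θ irrational: `θ n²` is never an integer for `n ≥ 1`. -/
lemma irr_ne_int {θ : ℝ} (hθirr : Irrational θ) {n : ℕ} (hn : 0 < n) (c : ℤ) :
    θ * (n:ℝ)^2 ≠ (c:ℝ) := by
  intro h
  have hn2 : ((n:ℝ))^2 ≠ 0 := by positivity
  apply hθirr
  refine ⟨(c : ℚ) / ((n:ℚ))^2, ?_⟩
  have hq : ((n:ℚ))^2 ≠ 0 := by positivity
  push_cast
  rw [div_eq_iff (by positivity : ((n:ℝ))^2 ≠ 0)]
  linarith [h]

/-- Climbing: `θ n²` lands just below a positive integer. -/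
lemma exists_sq_just_below {θ : ℝ} (hθpos : 0 < θ) (hθirr : Irrational θ)
    {ε : ℝ} (hε : 0 < ε) :
    ∃ (n N : ℕ), 0 < n ∧ 0 < N ∧ (N:ℝ) - ε < θ * (n:ℝ)^2 ∧ θ * (n:ℝ)^2 < N := by
  set δ : ℝ := min (ε^2/9) (min (ε/3) (1/2)) with hδdef
  have hδpos : 0 < δ := by
    apply lt_min (by positivity) (lt_min (by positivity) (by norm_num))
  obtain ⟨n₀, k, hn₀, hk⟩ := exists_sq_near_int θ hδpos
  have hδ1 : δ ≤ ε^2/9 := min_le_left _ _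
  have hδ2 : δ ≤ ε/3 := le_trans (min_le_right _ _) (min_le_left _ _)
  have hδ3 : δ ≤ 1/2 := le_trans (min_le_right _ _) (min_le_right _ _)
  clear_value δ
  have hθn : 0 < θ * (n₀:ℝ)^2 := by
    have : (0:ℝ) < (n₀:ℝ)^2 := by positivity
    positivity
  have habs := abs_lt.1 hk
  have hk0 : 0 ≤ k := by
    by_contra hneg
    push_neg at hneg
    have hk1 : k ≤ -1 := by omega
    have : (k:ℝ) ≤ -1 := by exact_mod_cast hk1
    linarith [habs.2]
  have hne := irr_ne_int hθirr hn₀ k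
  rcases lt_or_gt_of_ne hne with hlt | hgt
  · -- θ n₀² < k : already just below
    have hk1 : (1:ℝ) ≤ (k:ℝ) := by
      have : 0 < k := by
        by_contra hh
        push_neg at hh
        have : (k:ℝ) ≤ 0 := by exact_mod_cast hh
        linarith
      exact_mod_cast this
    have hc : ((k.toNat : ℕ) : ℝ) = (k:ℝ) := by
      exact_mod_cast congrArg (fun z : ℤ => (z:ℝ)) (Int.toNat_of_nonneg hk0)
    refine ⟨n₀, k.toNat, hn₀, ?_, ?_, ?_⟩
    · have : 0 < k := by exact_mod_cast lt_of_lt_of_le one_pos hk1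
      omega
    · rw [hc]; linarith [habs.1]
    · rw [hc]; exact hlt
  · -- θ n₀² > k : climb with δ₀ = θn₀² − k
    set δ₀ : ℝ := θ * (n₀:ℝ)^2 - k with hδ₀def
    clear_value δ₀
    have hδ₀pos : 0 < δ₀ := by simp [hδ₀def]; linarith
    have hδ₀lt : δ₀ < δ := by
      have := habs.2; simp only [hδ₀def]; linarith
    -- find minimal s with 1 < δ₀ s²
    have hex : ∃ s : ℕ, 1 < δ₀ * (s:ℝ)^2 := by
      obtain ⟨s, hs⟩ := exists_nat_gt (1/δ₀ + 1)
      refine ⟨s, ?_⟩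
      have hs1 : (1:ℝ) ≤ (s:ℝ) := by
        have : (0:ℝ) < 1/δ₀ := by positivity
        linarith
      have : 1/δ₀ < (s:ℝ) := by linarith
      have h2 : (s:ℝ) ≤ (s:ℝ)^2 := by nlinarith
      have : 1 < δ₀ * s := by
        rw [div_lt_iff₀ hδ₀pos] at this
        linarith
      nlinarith
    obtain ⟨s₁, hs₁spec, hs₁min⟩ :
        ∃ s₁ : ℕ, (1 < δ₀ * (s₁:ℝ)^2) ∧ ∀ m : ℕ, m < s₁ → ¬ (1 < δ₀ * (m:ℝ)^2) :=
      ⟨Nat.find hex, Nat.find_spec hex, fun m hm => Nat.find_min hex hm⟩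
    have hs₁2 : 2 ≤ s₁ := by
      by_contra hh
      push_neg at hh
      have hcases : s₁ = 0 ∨ s₁ = 1 := by omega
      rcases hcases with h|h <;> rw [h] at hs₁spec <;> push_cast at hs₁spec <;> nlinarith
    obtain ⟨s, rfl⟩ : ∃ s : ℕ, s₁ = s + 1 := ⟨s₁ - 1, by omega⟩
    have hs1 : 1 ≤ s := by omega
    have hsle : δ₀ * (s:ℝ)^2 ≤ 1 := by
      by_contra hh
      push_neg at hh
      exact hs₁min s (by omega) hh
    have hsne : δ₀ * (s:ℝ)^2 ≠ 1 := by
      intro h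
      have hns : 0 < n₀ * s := by positivity
      apply irr_ne_int hθirr hns (k * (s:ℕ)^2 + 1)
      have heq : θ * ((n₀ * s : ℕ):ℝ)^2 = (δ₀ + k) * (s:ℝ)^2 := by
        push_cast; simp only [hδ₀def]; ring
      rw [heq]
      push_cast
      nlinarith [h]
    have hslt : δ₀ * (s:ℝ)^2 < 1 := lt_of_le_of_ne hsle hsne
    -- step bound: δ₀ (2s+1) ≤ ε
    have hstep : δ₀ * (2*(s:ℝ) + 1) ≤ ε := by
      have hsq : (δ₀ * (s:ℝ))^2 ≤ δ₀ := by
        have : (δ₀ * s)^2 = δ₀ * (δ₀ * s^2) := by ring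
        rw [this]
        nlinarith
      have hx : 0 ≤ δ₀ * (s:ℝ) := mul_nonneg hδ₀pos.le (Nat.cast_nonneg s)
      have hb : (δ₀ * (s:ℝ))^2 ≤ (ε/3)^2 := by
        have hr : (ε/3)^2 = ε^2/9 := by ring
        rw [hr]; linarith [hsq]
      have h1 : δ₀ * (s:ℝ) ≤ ε/3 := by
        have h3 : (0:ℝ) ≤ ε/3 := by linarith
        exact (pow_le_pow_iff_left₀ hx h3 (by norm_num)).mp hb
      have h2 : δ₀ ≤ ε/3 := le_trans hδ₀lt.le hδ2
      linarith
    -- lower bound: δ₀ s² > 1 − ε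
    have hlow : 1 - ε < δ₀ * (s:ℝ)^2 := by
      have hsp : 1 < δ₀ * ((s:ℝ) + 1)^2 := by
        have : (((s+1 : ℕ)):ℝ) = (s:ℝ) + 1 := by push_cast; ring
        rw [this] at hs₁spec; exact hs₁spec
      nlinarith [hsp]
    have hc : ((k.toNat : ℕ) : ℝ) = (k:ℝ) := by
      exact_mod_cast congrArg (fun z : ℤ => (z:ℝ)) (Int.toNat_of_nonneg hk0)
    refine ⟨n₀ * s, k.toNat * s^2 + 1, by positivity, by positivity, ?_, ?_⟩
    · push_cast [hc]
      have : θ * ((n₀:ℝ) * s)^2 = (k + δ₀) * (s:ℝ)^2 := by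
        simp only [hδ₀def]; ring
      rw [this]
      have hkn : (0:ℝ) ≤ (k:ℝ) := by exact_mod_cast hk0
      nlinarith [hlow]
    · push_cast [hc]
      have : θ * ((n₀:ℝ) * s)^2 = (k + δ₀) * (s:ℝ)^2 := by
        simp only [hδ₀def]; ring
      rw [this]
      nlinarith [hslt]


theorem oppenheim_type (θ : ℝ) (hθpos : 0 < θ) (hθirr : Irrational θ) :
    ∀ ε > (0:ℝ), ∃ n m m' : ℕ, 0 < n ∧ 0 < m ∧ 0 < m' ∧
      -ε < θ * (n:ℝ)^2 + (m:ℝ)^2 - (m':ℝ)^2 ∧ θ * (n:ℝ)^2 + (m:ℝ)^2 - (m':ℝ)^2 < 0 := by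
  intro ε hε
  obtain ⟨n, N, hn, hN, hlow, hhigh⟩ :=
    exists_sq_just_below hθpos hθirr (show (0:ℝ) < ε/9 by linarith)
  rcases Nat.even_or_odd N with ⟨t, ht⟩ | ⟨t, ht⟩
  · -- N = 2t even, t ≥ 1 : use 2n, m = N−1, m' = N+1, target 4N
    have ht1 : 1 ≤ t := by omega
    refine ⟨2*n, N-1, N+1, by omega, by omega, by omega, ?_, ?_⟩
    · have hc1 : ((N-1 : ℕ):ℝ) = (N:ℝ) - 1 := by
        have : (1:ℕ) ≤ N := hN
        push_cast [this]; ring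
      rw [hc1]; push_cast
      nlinarith [hlow]
    · have hc1 : ((N-1 : ℕ):ℝ) = (N:ℝ) - 1 := by
        have : (1:ℕ) ≤ N := hN
        push_cast [this]; ring
      rw [hc1]; push_cast
      nlinarith [hhigh]
  · rcases Nat.eq_zero_or_pos t with ht0 | ht1
    · -- N = 1 : use 3n, m = 4, m' = 5, target 9
      subst ht0
      have hN1 : N = 1 := by omega
      subst hN1
      refine ⟨3*n, 4, 5, by omega, by norm_num, by norm_num, ?_, ?_⟩
      · push_cast
        push_cast at hlow
        nlinarith [hlow]
      · push_cast
        push_cast at hhigh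
        nlinarith [hhigh]
    · -- N = 2t+1 odd ≥ 3 : m = t, m' = t+1
      refine ⟨n, t, t+1, hn, ht1, by omega, ?_, ?_⟩
      · have hc : ((t+1:ℕ):ℝ)^2 - (t:ℝ)^2 = (N:ℝ) := by
          rw [ht]; push_cast; ring
        push_cast at hc ⊢
        nlinarith [hlow]
      · have hc : ((t+1:ℕ):ℝ)^2 - (t:ℝ)^2 = (N:ℝ) := by
          rw [ht]; push_cast; ring
        push_cast at hc ⊢
        nlinarith [hhigh]
end

section
/- There exists an absolute constant C₀ > 0 such that for all integers n ≥ 0 and all σ > 0, the solution kₙ(σ) of the secular equation tan(k) = 2σk/(k² − σ²) in [nπ, (n+1)π] satisfies kₙ(σ)² − (nπ)² ≤ C₀·σ. -/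
open Real Set

theorem RN_gap_upper :
    ∃ C₀ > (0:ℝ), ∀ n : ℕ, ∀ σ : ℝ, 0 < σ →
      ∀ k ∈ Icc ((n:ℝ) * π) (((n:ℝ) + 1) * π),
        Real.tan k = 2*σ*k / (k^2 - σ^2) →
        k^2 - ((n:ℝ)*π)^2 ≤ C₀ * σ := by
  have hπ := Real.pi_pos
  refine ⟨4 * π, by positivity, ?_⟩
  intro n σ hσ k hk heq
  obtain ⟨hk1, hk2⟩ := hk
  have hnπ : (0:ℝ) ≤ (n:ℝ) * π := by positivity
  have hk0 : 0 ≤ k := le_trans hnπ hk1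
  have hk2' : k ≤ (n:ℝ) * π + π := by linarith [hk2, (by ring : ((n:ℝ)+1)*π = (n:ℝ)*π + π)]
  by_cases hcase : k ≤ 2 * σ
  · nlinarith [mul_nonneg (sub_nonneg.mpr hk1) (add_nonneg hk0 hnπ),
      mul_le_mul_of_nonneg_right (show k - (n:ℝ)*π ≤ π by linarith) (add_nonneg hk0 hnπ),
      mul_le_mul_of_nonneg_left (show k + (n:ℝ)*π ≤ 2*k by linarith) hπ.le]
  · push_neg at hcase
    have hk0' : 0 < k := lt_trans (by linarith) hcase
    obtain ⟨t, ht⟩ : ∃ t, t = k - (n:ℝ) * π := ⟨_, rfl⟩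
    have ht0 : 0 ≤ t := by simp only [ht]; linarith
    have htπ : t ≤ π := by simp only [ht]; linarith
    have hσ2 : 4 * σ^2 ≤ k^2 := by nlinarith
    have hden : 0 < k^2 - σ^2 := by nlinarith
    have hR : 0 < 2*σ*k / (k^2 - σ^2) := div_pos (by positivity) hden
    have hkt : k = t + (n:ℝ) * π := by simp only [ht]; ring
    have htan : 0 < Real.tan t := by
      have hper : Real.tan (t + (n:ℝ) * π) = Real.tan t := Real.tan_periodic.nat_mul n t
      rw [← hper, ← hkt, heq]; exact hR
    have htlt : t < π / 2 := by
      by_contra h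
      push_neg at h
      rcases eq_or_lt_of_le h with h' | h'
      · rw [← h', Real.tan_pi_div_two] at htan; exact lt_irrefl 0 htan
      · rcases eq_or_lt_of_le htπ with h'' | h''
        · rw [h'', Real.tan_pi] at htan; exact lt_irrefl 0 htan
        · have hs : 0 < Real.sin t := Real.sin_pos_of_pos_of_lt_pi (by linarith) h''
          have hc : Real.cos t < 0 := Real.cos_neg_of_pi_div_two_lt_of_lt h' (by linarith)
          rw [Real.tan_eq_sin_div_cos] at htan
          exact absurd htan (not_lt.mpr (div_nonpos_of_nonneg_of_nonpos hs.le hc.le))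
    have hcos : 0 < Real.cos t := Real.cos_pos_of_mem_Ioo ⟨by linarith, htlt⟩
    have hsin_eq : Real.sin t = Real.tan t * Real.cos t := by
      rw [Real.tan_eq_sin_div_cos, div_mul_cancel₀ _ hcos.ne']
    have hcos1 : Real.cos t ≤ 1 := Real.cos_le_one t
    have hsin_le : Real.sin t ≤ 2*σ*k / (k^2 - σ^2) := by
      have hper : Real.tan (t + (n:ℝ) * π) = Real.tan t := Real.tan_periodic.nat_mul n t
      have htt : Real.tan t = 2*σ*k / (k^2 - σ^2) := by rw [← hper, ← hkt]; exact heq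
      rw [hsin_eq, htt]
      nlinarith [hR]
    have hs0 : 0 ≤ Real.sin t := Real.sin_nonneg_of_nonneg_of_le_pi ht0 htπ
    have h2 : Real.sin t * (k^2 - σ^2) ≤ 2*σ*k :=
      (le_div_iff₀ hden).mp hsin_le
    have step1 : Real.sin t * k * k * 3 ≤ 8 * σ * k := by nlinarith
    have step2 : Real.sin t * k ≤ 8/3 * σ := by nlinarith
    have h1' : 2 * t ≤ Real.sin t * π := by
      have := Real.mul_le_sin ht0 htlt.le
      rw [div_mul_eq_mul_div, div_le_iff₀ hπ] at this
      linarith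
    have step3 : t * k ≤ (4*π/3) * σ := by nlinarith
    have hnk : (n:ℝ)*π = k - t := by simp only [ht]; ring
    rw [hnk]
    have hexp : k^2 - (k - t)^2 = 2*(t*k) - t^2 := by ring
    rw [hexp]
    linarith [step3, sq_nonneg t, mul_pos hπ hσ]
end

section
/- The first-order behavior of the Robin frequencies at σ = 0: for each integer n ≥ 1, the function σ ↦ kₙ(σ) defined implicitly by the secular equation is differentiable at σ = 0 with kₙ'(0) = 2/(πn), and consequently the eigenvalue λₙ(σ) = kₙ(σ)² satisfies λₙ'(0) = 4. -/
open Real Set Filter Topology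

theorem kn_deriv_at_zero (n : ℕ) (hn : 1 ≤ n) (k : ℝ → ℝ)
    (hk : ∀ σ : ℝ, 0 ≤ σ → k σ ∈ Icc ((n:ℝ) * π) (((n:ℝ) + 1) * π) ∧
      Real.tan (k σ) = 2*σ*(k σ) / ((k σ)^2 - σ^2))
    (hk0 : k 0 = (n:ℝ) * π) :
    HasDerivWithinAt k (2 / (π * n)) (Ici (0:ℝ)) 0 ∧
      HasDerivWithinAt (fun σ => (k σ)^2) 4 (Ici (0:ℝ)) 0 := by
  have hn1 : (1:ℝ) ≤ (n:ℝ) := by exact_mod_cast hn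
  have hπ := Real.pi_pos
  have hπ3 := Real.pi_gt_three
  have hnπ : π ≤ (n:ℝ) * π := le_mul_of_one_le_left hπ.le hn1
  set y : ℝ → ℝ := fun σ => 2*σ*(k σ) / ((k σ)^2 - σ^2) with hy_def
  -- key facts for small positive σ
  have key : ∀ σ ∈ Ioo (0:ℝ) 1,
      (k σ = (n:ℝ) * π + Real.arctan (y σ) ∧ 0 < y σ ∧
        y σ ≤ (2 * ((n:ℝ)+1) * π) * σ) ∧ (1:ℝ) ≤ (k σ)^2 - σ^2 := by
    intro σ hσ
    obtain ⟨hσ0, hσ1⟩ := hσ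
    obtain ⟨⟨hkl, hku⟩, htan⟩ := hk σ hσ0.le
    have hkσ : (3:ℝ) < k σ := lt_of_lt_of_le (lt_of_lt_of_le hπ3 hnπ) hkl
    have hden : (1:ℝ) ≤ (k σ)^2 - σ^2 := by nlinarith
    have hypos : 0 < y σ := by
      apply div_pos (by nlinarith) (by linarith)
    have hg0 : 0 ≤ k σ - (n:ℝ) * π := by linarith
    have hgπ : k σ - (n:ℝ) * π ≤ π := by nlinarith
    have htg : Real.tan (k σ - (n:ℝ) * π) = y σ := by
      have h3 := (Real.tan_periodic.nat_mul n) (k σ - (n:ℝ) * π)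
      have h2 : k σ - (n:ℝ) * π + (n:ℕ) * π = k σ := by ring
      rw [h2] at h3
      rw [← h3]
      exact htan
    have hglt : k σ - (n:ℝ) * π < π / 2 := by
      by_contra h
      push_neg at h
      rcases eq_or_lt_of_le h with heq | hlt
      · rw [← heq, Real.tan_pi_div_two] at htg
        exact absurd htg.symm (ne_of_gt hypos)
      · have hsin : 0 ≤ Real.sin (k σ - (n:ℝ) * π) :=
          Real.sin_nonneg_of_nonneg_of_le_pi hg0 hgπ
        have hcos : Real.cos (k σ - (n:ℝ) * π) ≤ 0 :=
          Real.cos_nonpos_of_pi_div_two_le_of_le h (by linarith)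
        have : Real.tan (k σ - (n:ℝ) * π) ≤ 0 := by
          rw [Real.tan_eq_sin_div_cos]
          exact div_nonpos_of_nonneg_of_nonpos hsin hcos
        rw [htg] at this
        linarith
    have harc : Real.arctan (y σ) = k σ - (n:ℝ) * π := by
      rw [← htg, Real.arctan_tan (by linarith) hglt]
    refine ⟨⟨by linarith [harc], hypos, ?_⟩, hden⟩
    -- y σ ≤ 2 σ k σ ≤ 2 (n+1) π σ
    have h1 : y σ ≤ 2*σ*(k σ) := by
      rw [hy_def]
      exact div_le_self (by nlinarith) hden
    nlinarith
  -- continuity of k at 0⁺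
  have hIoo : Ioo (0:ℝ) 1 ∈ 𝓝[>] (0:ℝ) :=
    Ioo_mem_nhdsGT_of_mem (by constructor <;> norm_num)
  have harct : ∀ σ ∈ Ioo (0:ℝ) 1, Real.arctan (y σ) ≤ y σ := by
    intro σ hσ
    have hypos := (key σ hσ).1.2.1
    have harc0 : 0 ≤ Real.arctan (y σ) := by
      rw [← Real.arctan_zero]
      exact Real.arctan_strictMono.monotone hypos.le
    have := Real.le_tan harc0 (Real.arctan_lt_pi_div_two _)
    rwa [Real.tan_arctan] at this
  have hk_tendsto : Tendsto k (𝓝[>] (0:ℝ)) (𝓝 ((n:ℝ) * π)) := by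
    apply tendsto_of_tendsto_of_tendsto_of_le_of_le'
      (tendsto_const_nhds : Tendsto (fun _ : ℝ => (n:ℝ)*π) _ _)
      (f := k) (h := fun σ => (n:ℝ)*π + (2 * ((n:ℝ)+1) * π) * σ)
    · have : Tendsto (fun σ : ℝ => (n:ℝ)*π + (2 * ((n:ℝ)+1) * π) * σ)
          (𝓝 (0:ℝ)) (𝓝 ((n:ℝ)*π + (2 * ((n:ℝ)+1) * π) * 0)) :=
        (continuous_const.add (continuous_const.mul continuous_id)).tendsto 0
      simpa using this.mono_left nhdsWithin_le_nhds
    · filter_upwards [hIoo] with σ hσ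
      exact (hk σ hσ.1.le).1.1
    · filter_upwards [hIoo] with σ hσ
      obtain ⟨⟨heq, hypos, hbd⟩, hden⟩ := key σ hσ
      have := harct σ hσ
      linarith
  have hσ_tendsto : Tendsto (fun σ : ℝ => σ) (𝓝[>] (0:ℝ)) (𝓝 0) :=
    tendsto_id.mono_left nhdsWithin_le_nhds
  have hden_tendsto : Tendsto (fun σ => (k σ)^2 - σ^2) (𝓝[>] (0:ℝ))
      (𝓝 (((n:ℝ)*π)^2)) := by
    have := (hk_tendsto.pow 2).sub (hσ_tendsto.pow 2)
    simpa using this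
  have hden_ne : (((n:ℝ)*π)^2) ≠ 0 := by positivity
  have hratio : Tendsto (fun σ => 2*(k σ) / ((k σ)^2 - σ^2)) (𝓝[>] (0:ℝ))
      (𝓝 (2 / (π * (n:ℝ)))) := by
    have h2 : Tendsto (fun σ => 2*(k σ)) (𝓝[>] (0:ℝ)) (𝓝 (2*((n:ℝ)*π))) :=
      hk_tendsto.const_mul 2
    have := h2.div hden_tendsto hden_ne
    rw [Pi.div_def] at this
    convert this using 2
    have hn0 : (n:ℝ) ≠ 0 := by positivity
    field_simp
  have hy_tendsto : Tendsto y (𝓝[>] (0:ℝ)) (𝓝[≠] (0:ℝ)) := by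
    rw [tendsto_nhdsWithin_iff]
    constructor
    · have h2 : Tendsto (fun σ => 2*σ*(k σ)) (𝓝[>] (0:ℝ)) (𝓝 (2*0*((n:ℝ)*π))) :=
        ((hσ_tendsto.const_mul 2).mul hk_tendsto)
      have := h2.div hden_tendsto hden_ne
      simpa [hy_def, Pi.div_def] using this
    · filter_upwards [hIoo] with σ hσ
      exact (ne_of_gt (key σ hσ).1.2.1)
  have h1 : Tendsto (fun t => Real.arctan t / t) (𝓝[≠] (0:ℝ)) (𝓝 1) := by
    have h := (Real.hasDerivAt_arctan 0)
    rw [hasDerivAt_iff_tendsto_slope] at h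
    have heq : (slope Real.arctan 0) = fun t => Real.arctan t / t := by
      funext t
      simp [slope_def_field]
    rw [heq] at h
    simpa using h
  have hslope : Tendsto (slope k 0) (𝓝[>] (0:ℝ)) (𝓝 (2 / (π * (n:ℝ)))) := by
    have hmain : Tendsto (fun σ => (Real.arctan (y σ) / y σ) * (y σ / σ))
        (𝓝[>] (0:ℝ)) (𝓝 (1 * (2 / (π * (n:ℝ))))) := by
      apply Tendsto.mul (h1.comp hy_tendsto)
      -- y σ / σ = 2 k σ / den for σ > 0
      apply hratio.congr'
      filter_upwards [hIoo] with σ hσ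
      obtain ⟨⟨heq, hypos, _⟩, hden⟩ := key σ hσ
      have hσ0 : σ ≠ 0 := ne_of_gt hσ.1
      have hdne : (k σ)^2 - σ^2 ≠ 0 := by linarith
      rw [hy_def]
      field_simp
    rw [one_mul] at hmain
    apply hmain.congr'
    filter_upwards [hIoo] with σ hσ
    obtain ⟨⟨heq, hypos, _⟩, hden⟩ := key σ hσ
    have hyne : y σ ≠ 0 := ne_of_gt hypos
    have hσ0 : σ ≠ 0 := ne_of_gt hσ.1
    rw [slope_def_field, heq, hk0]
    field_simp
    ring
  have hfirst : HasDerivWithinAt k (2 / (π * n)) (Ici (0:ℝ)) 0 := by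
    rw [hasDerivWithinAt_iff_tendsto_slope]
    have : Ici (0:ℝ) \ {0} = Ioi (0:ℝ) := Set.Ici_sdiff_left
    rw [this]
    exact hslope
  refine ⟨hfirst, ?_⟩
  have hsq := hfirst.pow 2
  convert hsq using 1
  · rfl
  · rfl
  · rfl
  rw [hk0]
  have hn0 : (n:ℝ) ≠ 0 := by positivity
  field_simp
  ring
end

section
/- Second derivative of the squared Robin frequency at σ = 0: for each integer n ≥ 1, the function σ ↦ kₙ(σ)² satisfies (kₙ²)''(0) = −8/(πn)². -/
open Real Set Filter Topology

namespace KnSqAux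

noncomputable def P (c x : ℝ) : ℝ :=
  Real.tan ((x - c)/2) + x * (1 / Real.cos ((x - c)/2)^2) / 2

noncomputable def G (c x : ℝ) : ℝ := x * Real.tan ((x - c)/2)

lemma hasDerivAt_G {c x : ℝ} (hx : Real.cos ((x - c)/2) ≠ 0) :
    HasDerivAt (G c) (P c x) x := by
  have h1 : HasDerivAt (fun y : ℝ => (y - c)/2) (1/2) x :=
    ((hasDerivAt_id x).sub_const c).div_const 2
  have h2 : HasDerivAt (fun y : ℝ => Real.tan ((y - c)/2))
      ((1 / Real.cos ((x - c)/2)^2) * (1/2)) x :=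
    by have := (Real.hasDerivAt_tan hx).comp x h1; exact this
  have h3 := (hasDerivAt_id x).mul h2
  have hfn : HasDerivAt (fun y : ℝ => y * Real.tan ((y - c)/2))
      (1 * Real.tan ((x - c)/2) + x * (1 / Real.cos ((x - c)/2)^2 * (1/2))) x := h3
  convert hfn using 1
  · rfl
  simp only [P]; ring

lemma hasDerivAt_P_c (c : ℝ) : HasDerivAt (P c) 1 c := by
  have h1 : HasDerivAt (fun y : ℝ => (y - c)/2) (1/2) c :=
    ((hasDerivAt_id c).sub_const c).div_const 2
  have hc0 : ((c - c)/2 : ℝ) = 0 := by ring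
  have htan : HasDerivAt (fun y : ℝ => Real.tan ((y - c)/2)) (1/2) c := by
    have := (Real.hasDerivAt_tan (x := (c - c)/2) (by rw [hc0]; simp)).comp c h1
    simpa [hc0, Function.comp_def, Pi.div_def, Pi.mul_def] using this
  have hcos : HasDerivAt (fun y : ℝ => Real.cos ((y - c)/2)) 0 c := by
    have := (Real.hasDerivAt_cos ((c - c)/2)).comp c h1
    simpa [hc0, Function.comp_def, Pi.div_def, Pi.mul_def] using this
  have hcossq : HasDerivAt (fun y : ℝ => Real.cos ((y - c)/2)^2) 0 c := by
    have := hcos.pow 2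
    simpa [Pi.pow_def] using this
  have hne : Real.cos ((c - c)/2)^2 ≠ 0 := by rw [hc0]; simp
  have hinv : HasDerivAt (fun y : ℝ => 1 / Real.cos ((y - c)/2)^2) 0 c := by
    have := (hasDerivAt_const c (1:ℝ)).div hcossq hne
    simpa [hc0, Function.comp_def, Pi.div_def, Pi.mul_def] using this
  have hmul : HasDerivAt (fun y : ℝ => y * (1 / Real.cos ((y - c)/2)^2)) 1 c := by
    have := (hasDerivAt_id c).mul hinv
    simpa [hc0, Function.comp_def, Pi.div_def, Pi.mul_def] using this
  have hsum := htan.add (hmul.div_const 2)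
  have hfn : HasDerivAt (P c) (1/2 + 1/2) c := hsum
  convert hfn using 1
  norm_num

lemma P_self (c : ℝ) : P c c = c / 2 := by
  simp [P]

lemma P_lower {c x : ℝ} (hc : 0 < c) (hx : x ∈ Icc c (c + π/4)) : c/2 ≤ P c x := by
  have hpi := Real.pi_gt_three
  have hu0 : 0 ≤ (x - c)/2 := by
    have := hx.1; linarith
  have hu1 : (x - c)/2 ≤ π/8 := by
    have := hx.2; linarith
  have htn : 0 ≤ Real.tan ((x - c)/2) :=
    Real.tan_nonneg_of_nonneg_of_le_pi_div_two hu0 (by linarith)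
  have hcos1 : Real.cos ((x - c)/2) ≤ 1 := Real.cos_le_one _
  have hcosm1 : -1 ≤ Real.cos ((x - c)/2) := Real.neg_one_le_cos _
  have hcossq : Real.cos ((x - c)/2)^2 ≤ 1 := by nlinarith
  have hcospos : 0 < Real.cos ((x - c)/2) := by
    apply Real.cos_pos_of_mem_Ioo
    constructor
    · linarith
    · linarith
  have h1 : (1:ℝ) ≤ 1 / Real.cos ((x - c)/2)^2 := by
    rw [le_div_iff₀ (by positivity)]; linarith
  have hxpos : 0 < x := lt_of_lt_of_le hc hx.1
  have h2 : c / 2 ≤ x * (1 / Real.cos ((x - c)/2)^2) / 2 := by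
    have h3 : x ≤ x * (1 / Real.cos ((x - c)/2)^2) := by nlinarith
    have := hx.1
    linarith
  simp only [P]; linarith

lemma G_lipschitz_lower {c : ℝ} (hc : 0 < c) :
    ∀ a ∈ Icc c (c + π/4), ∀ b ∈ Icc c (c + π/4), a ≤ b →
      c/2 * (b - a) ≤ G c b - G c a := by
  have hpi := Real.pi_gt_three
  have hmem : ∀ x ∈ Icc c (c + π/4), Real.cos ((x - c)/2) ≠ 0 := by
    intro x hx
    have h1 := hx.1; have h2 := hx.2
    have : 0 < Real.cos ((x - c)/2) := by
      apply Real.cos_pos_of_mem_Ioo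
      constructor
      · linarith
      · linarith
    linarith
  have hdiff : ∀ x ∈ Icc c (c + π/4), HasDerivAt (G c) (P c x) x := fun x hx =>
    hasDerivAt_G (hmem x hx)
  apply Convex.mul_sub_le_image_sub_of_le_deriv (convex_Icc c (c + π/4))
  · intro x hx; exact (hdiff x hx).continuousAt.continuousWithinAt
  · intro x hx
    exact ((hdiff x (interior_subset hx)).differentiableAt).differentiableWithinAt
  · intro x hx
    rw [interior_Icc] at hx
    have hx' : x ∈ Icc c (c + π/4) := Ioo_subset_Icc_self hx
    rw [(hdiff x hx').deriv]
    exact P_lower hc hx'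

end KnSqAux

open KnSqAux
set_option maxHeartbeats 2000000 in

theorem kn_sq_second_deriv_at_zero (n : ℕ) (hn : 1 ≤ n) (k : ℝ → ℝ)
    (hk : ∀ σ : ℝ, 0 ≤ σ → k σ ∈ Icc ((n:ℝ) * π) (((n:ℝ) + 1) * π) ∧
      Real.tan (k σ) = 2*σ*(k σ) / ((k σ)^2 - σ^2))
    (hk0 : k 0 = (n:ℝ) * π) :
    derivWithin (derivWithin (fun σ => (k σ)^2) (Ici (0:ℝ))) (Ici (0:ℝ)) 0 =
      -8 / (π * (n:ℝ))^2 := by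
  have hpi := Real.pi_gt_three
  set c : ℝ := (n:ℝ) * π with hc_def
  have hn1 : (1:ℝ) ≤ (n:ℝ) := by exact_mod_cast hn
  have hcge : π ≤ c := by
    have h := mul_le_mul_of_nonneg_right hn1 Real.pi_pos.le
    rw [one_mul] at h
    exact h
  have hcpos : 0 < c := lt_of_lt_of_le Real.pi_pos hcge
  -- Step 1
  have key : ∀ σ ∈ Icc (0:ℝ) (1/2), k σ ∈ Icc c (c + π/4) ∧ G c (k σ) = σ := by
    intro σ hσ
    rcases eq_or_lt_of_le hσ.1 with h0 | h0
    · rw [← h0, hk0]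
      refine ⟨⟨le_refl _, by linarith [Real.pi_pos]⟩, ?_⟩
      simp [G]
    obtain ⟨hmem, heq⟩ := hk σ hσ.1
    set x := k σ with hx_def
    have hx1 : c ≤ x := hmem.1
    have hx2 : x ≤ c + π := by
      have h := hmem.2
      have h' : ((n:ℝ) + 1) * π = c + π := by rw [hc_def]; ring
      linarith [h' ▸ h]
    have hσhalf : σ ≤ 1/2 := hσ.2
    have hσx : σ < x := by linarith
    have hden : 0 < x^2 - σ^2 := by nlinarith
    have hypos : 0 < 2*σ*x / (x^2 - σ^2) :=
      div_pos (by nlinarith) hden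
    have htanpos : 0 < Real.tan x := by rw [heq]; exact hypos
    have hper : Real.tan x = Real.tan (x - c) := by
      have h := (Real.tan_periodic.nat_mul n) (x - c)
      rw [show x - c + (n:ℝ) * π = x by rw [hc_def]; ring] at h
      exact h
    have hxc_lt : x - c < π/2 := by
      by_contra hcon
      push_neg at hcon
      have h1 : x - c - π ≤ 0 := by linarith
      have h2 : -(π/2) ≤ x - c - π := by linarith
      have h3 : Real.tan (x - c - π) ≤ 0 :=
        Real.tan_nonpos_of_nonpos_of_neg_pi_div_two_le h1 h2
      have h4 : Real.tan (x - c) = Real.tan (x - c - π) := by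
        have h5 := Real.tan_periodic (x - c - π)
        rw [show x - c - π + π = x - c by ring] at h5
        exact h5
      rw [hper, h4] at htanpos
      linarith
    have hxc_pos : 0 < x - c := by
      rcases eq_or_lt_of_le hx1 with h | h
      · exfalso
        have hz : x - c = 0 := by linarith
        rw [hper, hz, Real.tan_zero] at htanpos
        exact lt_irrefl 0 htanpos
      · linarith
    have hy1 : 2*σ*x / (x^2 - σ^2) ≤ 1 := by
      rw [div_le_one hden]
      nlinarith
    have htle : Real.tan (x - c) ≤ 1 := by
      rw [← hper, heq]; exact hy1
    have hxc_le : x - c ≤ π/4 := by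
      by_contra hcon
      push_neg at hcon
      have h := Real.tan_lt_tan_of_nonneg_of_lt_pi_div_two
        (by positivity : (0:ℝ) ≤ π/4) hxc_lt hcon
      rw [Real.tan_pi_div_four] at h
      linarith
    set t := Real.tan ((x - c)/2) with ht_def
    have ht0 : 0 < t :=
      Real.tan_pos_of_pos_of_lt_pi_div_two (by linarith) (by linarith)
    have ht1 : t < 1 := by
      have h := Real.tan_lt_tan_of_nonneg_of_lt_pi_div_two
        (by linarith : (0:ℝ) ≤ (x - c)/2) (by linarith : π/4 < π/2)
        (by linarith : (x - c)/2 < π/4)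
      rwa [Real.tan_pi_div_four] at h
    have hdouble : Real.tan (x - c) = 2*t/(1 - t^2) := by
      rw [show x - c = 2*((x - c)/2) by ring, Real.tan_two_mul, ← ht_def]
    have ht1sq : (1 - t^2) ≠ 0 := ne_of_gt (by nlinarith)
    have hkey : 2*t/(1 - t^2) = 2*σ*x/(x^2 - σ^2) := by
      rw [← hdouble, ← hper]; exact heq
    have hcross : 2*t*(x^2 - σ^2) = 2*σ*x*(1 - t^2) :=
      (div_eq_div_iff ht1sq hden.ne').mp hkey
    have hfact : (t*x - σ)*(x + σ*t) = 0 := by linear_combination hcross / 2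
    have hpos2 : 0 < x + σ*t := by nlinarith
    have htx : t*x = σ := by
      rcases mul_eq_zero.mp hfact with h | h
      · linarith
      · linarith
    refine ⟨⟨by linarith, by linarith⟩, ?_⟩
    simp only [G]
    rw [← ht_def, mul_comm]
    exact htx
  -- Step 2: Lipschitz
  have hlip : ∀ σ₁ ∈ Icc (0:ℝ) (1/2), ∀ σ₂ ∈ Icc (0:ℝ) (1/2),
      c/2 * |k σ₁ - k σ₂| ≤ |σ₁ - σ₂| := by
    intro σ₁ h1 σ₂ h2
    have hG := G_lipschitz_lower hcpos
    obtain ⟨m1, e1⟩ := key σ₁ h1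
    obtain ⟨m2, e2⟩ := key σ₂ h2
    rcases le_total (k σ₁) (k σ₂) with h | h
    · have hh := hG _ m1 _ m2 h
      rw [e1, e2] at hh
      have ha : |k σ₁ - k σ₂| = k σ₂ - k σ₁ := by
        rw [abs_sub_comm, abs_of_nonneg (by linarith)]
      have hb : σ₂ - σ₁ ≤ |σ₁ - σ₂| := by
        rw [abs_sub_comm]; exact le_abs_self _
      rw [ha]; linarith
    · have hh := hG _ m2 _ m1 h
      rw [e1, e2] at hh
      have ha : |k σ₁ - k σ₂| = k σ₁ - k σ₂ := abs_of_nonneg (by linarith)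
      have hb : σ₁ - σ₂ ≤ |σ₁ - σ₂| := le_abs_self _
      rw [ha]; linarith
  have hPk_pos : ∀ σ ∈ Icc (0:ℝ) (1/2), c/2 ≤ P c (k σ) := fun σ hσ =>
    P_lower hcpos (key σ hσ).1
  -- Step 3: derivative of k
  have hkd : ∀ σ₀ ∈ Ico (0:ℝ) (1/2), HasDerivWithinAt k (P c (k σ₀))⁻¹ (Ici 0) σ₀ := by
    intro σ₀ hσ₀
    have hσ₀m : σ₀ ∈ Icc (0:ℝ) (1/2) := ⟨hσ₀.1, hσ₀.2.le⟩
    obtain ⟨hkm, hGk⟩ := key σ₀ hσ₀m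
    rw [hasDerivWithinAt_iff_tendsto_slope]
    have h1F : Iio (1/2:ℝ) ∈ 𝓝[Ici (0:ℝ) \ {σ₀}] σ₀ :=
      nhdsWithin_le_nhds (Iio_mem_nhds hσ₀.2)
    have h2F : Ici (0:ℝ) \ {σ₀} ∈ 𝓝[Ici (0:ℝ) \ {σ₀}] σ₀ := self_mem_nhdsWithin
    have hev : ∀ᶠ σ in 𝓝[Ici (0:ℝ) \ {σ₀}] σ₀, σ ∈ Icc (0:ℝ) (1/2) ∧ σ ≠ σ₀ := by
      filter_upwards [h1F, h2F] with σ hσa hσb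
      exact ⟨⟨hσb.1, le_of_lt hσa⟩, by simpa using hσb.2⟩
    have htend0 : Tendsto (fun σ => k σ - k σ₀) (𝓝[Ici (0:ℝ) \ {σ₀}] σ₀) (𝓝 0) := by
      apply squeeze_zero_norm' (a := fun σ => 2/c * |σ - σ₀|)
      · filter_upwards [hev] with σ hσ
        have hh := hlip σ hσ.1 σ₀ hσ₀m
        have hmul := mul_le_mul_of_nonneg_left hh
          (le_of_lt (show (0:ℝ) < 2/c by positivity))
        have heq2 : 2/c * (c/2 * |k σ - k σ₀|) = |k σ - k σ₀| := by
          field_simp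
        rw [Real.norm_eq_abs]
        linarith
      · have hco : Continuous fun σ : ℝ => 2/c * |σ - σ₀| := by
          fun_prop
        have h := hco.tendsto σ₀
        simp only [sub_self, abs_zero, mul_zero] at h
        exact h.mono_left nhdsWithin_le_nhds
    have htendk : Tendsto k (𝓝[Ici (0:ℝ) \ {σ₀}] σ₀) (𝓝 (k σ₀)) := by
      have h := htend0.add_const (k σ₀)
      simpa using h
    have hmapsto : ∀ᶠ σ in 𝓝[Ici (0:ℝ) \ {σ₀}] σ₀, k σ ≠ k σ₀ := by
      filter_upwards [hev] with σ hσ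
      intro hcon
      obtain ⟨_, hGσ⟩ := key σ hσ.1
      apply hσ.2
      rw [← hGσ, hcon, hGk]
    have htendk' : Tendsto k (𝓝[Ici (0:ℝ) \ {σ₀}] σ₀) (𝓝[≠] (k σ₀)) :=
      tendsto_nhdsWithin_of_tendsto_nhds_of_eventually_within k htendk
        (hmapsto.mono fun σ h => Set.mem_compl_singleton_iff.mpr h)
    have hcosne : Real.cos ((k σ₀ - c)/2) ≠ 0 := by
      have h1 := hkm.1; have h2 := hkm.2
      have : 0 < Real.cos ((k σ₀ - c)/2) := by
        apply Real.cos_pos_of_mem_Ioo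
        constructor
        · linarith
        · linarith
      linarith
    have hslope : Tendsto (slope (G c) (k σ₀)) (𝓝[≠] (k σ₀)) (𝓝 (P c (k σ₀))) :=
      hasDerivAt_iff_tendsto_slope.mp (hasDerivAt_G hcosne)
    have hPne : P c (k σ₀) ≠ 0 :=
      ne_of_gt (lt_of_lt_of_le (half_pos hcpos) (hPk_pos σ₀ hσ₀m))
    have hcomp : Tendsto (fun σ => (slope (G c) (k σ₀) (k σ))⁻¹)
        (𝓝[Ici (0:ℝ) \ {σ₀}] σ₀) (𝓝 (P c (k σ₀))⁻¹) :=
      Filter.Tendsto.inv₀ (hslope.comp htendk') hPne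
    apply hcomp.congr'
    filter_upwards [hev, hmapsto] with σ hσ hkne
    obtain ⟨_, hGσ⟩ := key σ hσ.1
    rw [slope_def_field, slope_def_field, hGσ, hGk, inv_div]
  -- Step 4
  have hsq : ∀ σ₀ ∈ Ico (0:ℝ) (1/2),
      derivWithin (fun σ => (k σ)^2) (Ici (0:ℝ)) σ₀ = 2 * k σ₀ * (P c (k σ₀))⁻¹ := by
    intro σ₀ hσ₀
    have h := (hkd σ₀ hσ₀).pow 2
    have h2 := h.derivWithin (uniqueDiffOn_Ici 0 σ₀ (mem_Ici.mpr hσ₀.1))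
    rw [show (fun σ => k σ ^ 2) = k ^ 2 from rfl, h2]
    norm_num
  -- Step 5
  have hd0 : HasDerivWithinAt k (P c c)⁻¹ (Ici (0:ℝ)) 0 := by
    have h := hkd 0 ⟨le_refl _, by norm_num⟩
    rwa [hk0] at h
  have hPcc : P c c = c/2 := P_self c
  have hPder : HasDerivAt (P c) 1 (k 0) := by rw [hk0]; exact hasDerivAt_P_c c
  have hPk : HasDerivWithinAt (fun σ => P c (k σ)) (1 * (P c c)⁻¹) (Ici 0) 0 :=
    hPder.comp_hasDerivWithinAt 0 hd0
  have hPk0ne : P c (k 0) ≠ 0 := by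
    rw [hk0, hPcc]
    exact ne_of_gt (half_pos hcpos)
  have hinv : HasDerivWithinAt (fun σ => (P c (k σ))⁻¹)
      (-(1 * (P c c)⁻¹) / (P c (k 0))^2) (Ici 0) 0 := hPk.inv hPk0ne
  have h2k : HasDerivWithinAt (fun σ => 2 * k σ) (2 * (P c c)⁻¹) (Ici 0) 0 :=
    hd0.const_mul 2
  have hmul : HasDerivWithinAt (fun σ => 2 * k σ * (P c (k σ))⁻¹)
      (2 * (P c c)⁻¹ * (P c (k 0))⁻¹ + (2 * k 0) * (-(1 * (P c c)⁻¹) / (P c (k 0))^2))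
      (Ici 0) 0 := h2k.mul hinv
  have hmul' : HasDerivWithinAt (fun σ => 2 * k σ * (P c (k σ))⁻¹)
      (-8/c^2) (Ici 0) 0 := by
    convert hmul using 1
    rw [hk0, hPcc]
    field_simp
    ring
  have hfin : HasDerivWithinAt (derivWithin (fun σ => (k σ)^2) (Ici (0:ℝ)))
      (-8/c^2) (Ici 0) 0 := by
    apply hmul'.congr_of_eventuallyEq
    · have h1 : Iio (1/2:ℝ) ∈ 𝓝[Ici (0:ℝ)] (0:ℝ) :=
        nhdsWithin_le_nhds (Iio_mem_nhds (by norm_num))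
      have h2 : Ici (0:ℝ) ∈ 𝓝[Ici (0:ℝ)] (0:ℝ) := self_mem_nhdsWithin
      filter_upwards [h1, h2] with σ ha hb
      exact hsq σ ⟨hb, ha⟩
    · exact hsq 0 ⟨le_refl _, by norm_num⟩
  have hfinal := hfin.derivWithin (uniqueDiffOn_Ici 0 0 self_mem_Ici)
  rw [hfinal, hc_def]
  ring
end
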